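/- Let Ω ⊆ ℝ² be a bounded domain (open and connected) with smooth boundary, and let g : ∂Ω → N be continuous and not homotopically trivial. Let Q : Ω̄ → S₀ be continuous with Q = g on ∂Ω. If Q(x) ≠ 0 and β(Q(x)) < 1 for every x ∈ Ω̄, then a contradiction follows; equivalently, every continuous Q : Ω̄ → S₀ with Q = g on ∂Ω which satisfies β(Q(x)) < 1 at every point where Q(x) ≠ 0 must vanish somewhere: min_{Ω̄} |Q| = 0. -/

import Mathlib

open Matrix Metric Set

noncomputable section

abbrev M3 : Type := Matrix (Fin 3) (Fin 3) ℝ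

abbrev E2 : Type := EuclideanSpace ℝ (Fin 2)

/-- The biaxiality parameter β(Q) = 1 − 6 (tr Q³)² / (tr Q²)³. -/
def beta (Q : M3) : ℝ := 1 - 6 * ((Q * Q * Q).trace) ^ 2 / ((Q * Q).trace) ^ 3

/-- The (rescaled) vacuum manifold N = { √(3/2)( n⊗n − (1/3)Id ) : |n| = 1 }. -/
def Nset : Set M3 :=
  {Q | ∃ n : Fin 3 → ℝ, (∑ i, n i ^ 2) = 1 ∧
    Q = Real.sqrt (3/2) • (vecMulVec n n - (1/3 : ℝ) • (1 : M3))}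

/-- An open set Ω ⊆ ℝ² has smooth boundary if near every boundary point it is the
sublevel set of a smooth local defining function with nonvanishing differential. -/
def HasSmoothBoundary (Ω : Set E2) : Prop :=
  ∀ x ∈ frontier Ω, ∃ (U : Set E2) (f : E2 → ℝ), IsOpen U ∧ x ∈ U ∧
    ContDiff ℝ (⊤ : ℕ∞) f ∧ (∀ y ∈ U, fderiv ℝ f y ≠ 0) ∧
    Ω ∩ U = {y ∈ U | f y < 0}

/-- g : ∂Ω → N is homotopically trivial if it admits a continuous extension Ω̄ → N. -/
def HomotopicallyTrivial (Ω : Set E2) (g : E2 → M3) : Prop :=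
  ∃ G : E2 → M3, ContinuousOn G (closure Ω) ∧ (∀ x ∈ closure Ω, G x ∈ Nset) ∧
    ∀ x ∈ frontier Ω, G x = g x

/-!
Since `Q` never vanishes and `β(Q) < 1`, the cubic invariant `tr Q³` never vanishes on the
connected set `Ω̄`; it is positive on `∂Ω`, where `Q = g ∈ N`, hence everywhere. On traceless
symmetric matrices with `tr A³ > 0` the largest eigenvalue `λ(A)` is simple and given by Viète's
trigonometric formula, so the projection `P(A)` onto its eigenline depends continuously on `A`.
The map `A ↦ √(3/2) (P(A) - I/3)` is a retraction of this region onto `N`; composed with `Q` it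
extends `g` continuously to `Ω̄` with values in `N`, contradicting the nontriviality of `g`.
-/

open Real

theorem IsPreconnected.forall_pos_of_ne_zero {X : Type*} [TopologicalSpace X] {s : Set X}
    {f : X → ℝ} (hs : IsPreconnected s) (hf : ContinuousOn f s) (hne : ∀ x ∈ s, f x ≠ 0)
    {x₀ : X} (hx₀ : x₀ ∈ s) (hpos : 0 < f x₀) : ∀ x ∈ s, 0 < f x := by
  intro x hx
  by_contra! hle
  obtain ⟨z, hz, hz0⟩ := hs.intermediate_value hx hx₀ hf ⟨hle, hpos.le⟩
  exact hne z hz hz0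

theorem exists_eq_single_of_mul_self_eq_self {n : Type*} [Fintype n] [DecidableEq n]
    {μ : n → ℝ} (hμ : μ * μ = μ) (hsum : ∑ i, μ i = 1) : ∃ i, μ = Pi.single i 1 := by
  have hnonneg : ∀ j, 0 ≤ μ j := fun j => by
    rw [← congrFun hμ j]
    exact mul_self_nonneg _
  obtain ⟨i, hi⟩ : ∃ i, μ i ≠ 0 := by
    by_contra! h
    simp [h] at hsum
  have hμi : μ i = 1 := (mul_eq_right₀ hi).mp (congrFun hμ i)
  have hrest : ∑ j ∈ Finset.univ.erase i, μ j = 0 := by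
    rw [← Finset.add_sum_erase _ _ (Finset.mem_univ i), hμi] at hsum
    linarith
  refine ⟨i, funext fun j => ?_⟩
  rcases eq_or_ne j i with rfl | hj
  · simp [hμi]
  · rw [Pi.single_eq_of_ne hj]
    exact (Finset.sum_eq_zero_iff_of_nonneg fun k _ => hnonneg k).mp hrest j (by simp [hj])

namespace Matrix

section Orthogonal

variable {n : Type*} [Fintype n] [DecidableEq n]

theorem exists_orthogonal_diagonalization {A : Matrix n n ℝ} (hA : Aᵀ = A) :
    ∃ (U : Matrix n n ℝ) (μ : n → ℝ), Uᵀ * U = 1 ∧ A = U * diagonal μ * Uᵀ := by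
  have hH : A.IsHermitian := by rwa [IsHermitian, conjTranspose_eq_transpose_of_trivial]
  refine ⟨hH.eigenvectorUnitary, hH.eigenvalues, ?_, ?_⟩
  · simpa [star_eq_conjTranspose] using (mem_unitaryGroup_iff').mp hH.eigenvectorUnitary.2
  · simpa [star_eq_conjTranspose, Function.comp_def] using hH.spectral_theorem

variable {U : Matrix n n ℝ}

theorem conj_diagonal_mul_conj_diagonal (hU : Uᵀ * U = 1) (d e : n → ℝ) :
    U * diagonal d * Uᵀ * (U * diagonal e * Uᵀ) = U * diagonal (d * e) * Uᵀ := by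
  rw [show U * diagonal d * Uᵀ * (U * diagonal e * Uᵀ) =
      U * diagonal d * (Uᵀ * U) * diagonal e * Uᵀ by simp only [Matrix.mul_assoc],
    hU, Matrix.mul_one, Matrix.mul_assoc U, diagonal_mul_diagonal]
  rfl

theorem trace_conj_diagonal (hU : Uᵀ * U = 1) (d : n → ℝ) :
    (U * diagonal d * Uᵀ).trace = ∑ i, d i := by
  rw [trace_mul_cycle, hU, Matrix.one_mul, trace_diagonal]

theorem exists_eq_vecMulVec_of_mul_self_eq_self {P : Matrix n n ℝ} (hPT : Pᵀ = P)
    (hPP : P * P = P) (htr : P.trace = 1) :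
    ∃ v : n → ℝ, ∑ i, v i ^ 2 = 1 ∧ P = vecMulVec v v := by
  obtain ⟨U, μ, hU, rfl⟩ := exists_orthogonal_diagonalization hPT
  rw [conj_diagonal_mul_conj_diagonal hU] at hPP
  have hμ : μ * μ = μ := by
    have := congrArg (fun B => Uᵀ * B * U) hPP
    simp only [Matrix.mul_assoc, hU, Matrix.mul_one] at this
    simp only [← Matrix.mul_assoc, hU, Matrix.one_mul] at this
    exact diagonal_injective this
  rw [trace_conj_diagonal hU] at htr
  obtain ⟨i, rfl⟩ := exists_eq_single_of_mul_self_eq_self hμ htr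
  refine ⟨fun j => U j i, ?_, ?_⟩
  · simpa [mul_apply, one_apply, sq] using congrFun (congrFun hU i) i
  · ext j k
    simp [mul_apply, diagonal, Pi.single_apply, vecMulVec_apply]

end Orthogonal

theorem mul_mul_self_eq_of_trace_eq_zero {A : Matrix (Fin 3) (Fin 3) ℝ} (h : A.trace = 0) :
    A * A * A = ((A * A).trace / 2) • A + ((A * A * A).trace / 3) • 1 := by
  have h22 : A 2 2 = -A 0 0 - A 1 1 := by
    rw [trace_fin_three] at h
    linarith
  ext i j
  fin_cases i <;> fin_cases j <;>
    simp [mul_apply, Fin.sum_univ_three, trace_fin_three, h22] <;> ring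

theorem six_mul_sq_trace_cube_le {A : Matrix (Fin 3) (Fin 3) ℝ} (hA : Aᵀ = A)
    (h : A.trace = 0) : 6 * (A * A * A).trace ^ 2 ≤ (A * A).trace ^ 3 := by
  obtain ⟨U, μ, hU, rfl⟩ := exists_orthogonal_diagonalization hA
  simp only [conj_diagonal_mul_conj_diagonal hU, trace_conj_diagonal hU, Fin.sum_univ_three,
    Pi.mul_apply] at h ⊢
  -- twice the discriminant of the characteristic polynomial
  have hdisc : (μ 0 * μ 0 + μ 1 * μ 1 + μ 2 * μ 2) ^ 3 -
      6 * (μ 0 * μ 0 * μ 0 + μ 1 * μ 1 * μ 1 + μ 2 * μ 2 * μ 2) ^ 2 =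
      2 * ((μ 0 - μ 1) * (μ 1 - μ 2) * (μ 2 - μ 0)) ^ 2 := by
    rw [show μ 2 = -μ 0 - μ 1 by linarith]
    ring
  linarith [sq_nonneg ((μ 0 - μ 1) * (μ 1 - μ 2) * (μ 2 - μ 0))]

end Matrix

/-- Viète's trigonometric formula for the largest root of `x³ = (p/2) x + t/3`, real-rooted
when `6 t² ≤ p³`. -/
def vieteRoot (p t : ℝ) : ℝ :=
  2 * √(p / 6) * cos (arccos (t / (6 * √(p / 6) ^ 3)) / 3)

theorem sq_six_mul_sqrt_div_six_pow_three {p : ℝ} (hp : 0 ≤ p) :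
    (6 * √(p / 6) ^ 3) ^ 2 = p ^ 3 / 6 := by
  rw [show (6 * √(p / 6) ^ 3) ^ 2 = 36 * (√(p / 6) ^ 2) ^ 3 by ring, sq_sqrt (by positivity)]
  ring

theorem vieteRoot_cube {p t : ℝ} (hp : 0 < p) (ht : 6 * t ^ 2 ≤ p ^ 3) :
    vieteRoot p t ^ 3 = p / 2 * vieteRoot p t + t / 3 := by
  set r := √(p / 6) with hr
  have hr2 : r ^ 2 = p / 6 := sq_sqrt (by positivity)
  have hr0 : 0 < r := sqrt_pos.mpr (by positivity)
  set c := t / (6 * r ^ 3) with hc_def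
  have hc : |c| ≤ 1 := by
    rw [← sq_le_one_iff_abs_le_one, div_pow, div_le_one (by positivity), hr,
      sq_six_mul_sqrt_div_six_pow_three hp.le]
    linarith
  have hcos : 4 * cos (arccos c / 3) ^ 3 - 3 * cos (arccos c / 3) = c := by
    rw [← cos_three_mul, mul_div_cancel₀ _ three_ne_zero,
      cos_arccos (abs_le.1 hc).1 (abs_le.1 hc).2]
  have ht' : t = 6 * r ^ 3 * c := by
    rw [hc_def]
    field_simp
  show (2 * r * cos (arccos c / 3)) ^ 3 = p / 2 * (2 * r * cos (arccos c / 3)) + t / 3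
  linear_combination (2 * r ^ 3) * hcos + r * cos (arccos c / 3) * (6 * hr2) - (1 / 3) * ht'

theorem half_le_sq_vieteRoot {p t : ℝ} (hp : 0 ≤ p) (ht : 0 ≤ t) :
    p / 2 ≤ vieteRoot p t ^ 2 := by
  set r := √(p / 6)
  have hr2 : r ^ 2 = p / 6 := sq_sqrt (by positivity)
  set φ := arccos (t / (6 * r ^ 3)) / 3
  have hφ0 : 0 ≤ φ := div_nonneg (arccos_nonneg _) zero_le_three
  have hφ : φ ≤ π / 6 := by
    have := arccos_le_pi_div_two.2 (by positivity : 0 ≤ t / (6 * r ^ 3))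
    simp only [φ]
    linarith
  have hcos : √3 / 2 ≤ cos φ := by
    rw [← cos_pi_div_six]
    exact cos_le_cos_of_nonneg_of_le_pi hφ0 (by linarith [pi_pos]) hφ
  have hcos_sq : 3 / 4 ≤ cos φ ^ 2 := by
    nlinarith [sqrt_nonneg 3, sq_sqrt (show (0 : ℝ) ≤ 3 by norm_num)]
  show p / 2 ≤ (2 * r * cos φ) ^ 2
  nlinarith

theorem vieteRoot_of_six_mul_sq_eq {p t : ℝ} (hp : 0 < p) (ht : 0 < t)
    (h : 6 * t ^ 2 = p ^ 3) : vieteRoot p t = 2 * √(p / 6) := by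
  have hc : t / (6 * √(p / 6) ^ 3) = 1 := by
    have hr0 : 0 < √(p / 6) := sqrt_pos.mpr (by positivity)
    rw [div_eq_one_iff_eq (by positivity), ← pow_left_inj₀ ht.le (by positivity) two_ne_zero,
      sq_six_mul_sqrt_div_six_pow_three hp.le]
    linarith
  rw [vieteRoot, hc, arccos_one, zero_div, cos_zero, mul_one]

theorem mul_self_eq_smul_of_cube_eq {R : Type*} [Ring R] [Algebra ℝ R] {a : R} {q e l : ℝ}
    (ha : a * a * a = q • a + e • 1) (hl : l ^ 3 = q * l + e) :
    (a * a + l • a + (l ^ 2 - q) • 1) * (a * a + l • a + (l ^ 2 - q) • 1) =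
      (3 * l ^ 2 - q) • (a * a + l • a + (l ^ 2 - q) • 1) := by
  have ha4 : a * a * (a * a) = q • (a * a) + e • a := by
    rw [← mul_assoc, ha, add_mul, smul_mul_assoc, smul_mul_assoc, one_mul]
  simp only [mul_add, add_mul, smul_mul_assoc, mul_smul_comm, mul_one, one_mul, ha4,
    ← mul_assoc a a a, ha]
  match_scalars
  · ring
  · linear_combination (-1) * hl
  · linear_combination (-2 * l) * hl

def S0Pos : Set M3 := {A | Aᵀ = A ∧ A.trace = 0 ∧ 0 < (A * A * A).trace}

def topEigenvalue (A : M3) : ℝ := vieteRoot (A * A).trace (A * A * A).trace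

/-- Sylvester's formula: for a simple root `λ` of the characteristic polynomial
`χ(x) = x³ - (tr A²/2) x - tr A³/3`, the spectral projection onto `ker (A - λ)` is `r(A) / χ'(λ)`
with `r(x) = (χ(x) - χ(λ)) / (x - λ)`. -/
def topEigenprojection (A : M3) : M3 :=
  (3 * topEigenvalue A ^ 2 - (A * A).trace / 2)⁻¹ •
    (A * A + topEigenvalue A • A + (topEigenvalue A ^ 2 - (A * A).trace / 2) • 1)

def vacuumRetraction (A : M3) : M3 := √(3 / 2) • (topEigenprojection A - (1 / 3 : ℝ) • 1)

namespace S0Pos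

variable {A : M3} (hA : A ∈ S0Pos)
include hA

theorem trace_mul_self_pos : 0 < (A * A).trace := by
  have h := six_mul_sq_trace_cube_le hA.1 hA.2.1
  by_contra! hp
  nlinarith [hA.2.2, Odd.pow_nonpos (by decide : Odd 3) hp]

theorem topEigenvalue_cube :
    topEigenvalue A ^ 3 = (A * A).trace / 2 * topEigenvalue A + (A * A * A).trace / 3 :=
  vieteRoot_cube (trace_mul_self_pos hA) (six_mul_sq_trace_cube_le hA.1 hA.2.1)

theorem three_mul_sq_topEigenvalue_sub_pos :
    0 < 3 * topEigenvalue A ^ 2 - (A * A).trace / 2 := by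
  have := half_le_sq_vieteRoot (trace_mul_self_pos hA).le hA.2.2.le
  unfold topEigenvalue
  linarith [trace_mul_self_pos hA]

theorem topEigenprojection_mul_self :
    topEigenprojection A * topEigenprojection A = topEigenprojection A := by
  have hM := mul_self_eq_smul_of_cube_eq (mul_mul_self_eq_of_trace_eq_zero hA.2.1)
    (topEigenvalue_cube hA)
  have hD := (three_mul_sq_topEigenvalue_sub_pos hA).ne'
  rw [topEigenprojection, smul_mul_smul_comm, hM, smul_smul]
  congr 1
  field_simp

theorem transpose_topEigenprojection : (topEigenprojection A)ᵀ = topEigenprojection A := by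
  simp [topEigenprojection, transpose_mul, hA.1]

theorem trace_topEigenprojection : (topEigenprojection A).trace = 1 := by
  simp only [topEigenprojection, trace_smul, trace_add, trace_one, hA.2.1, smul_eq_mul]
  rw [inv_mul_eq_one₀ (three_mul_sq_topEigenvalue_sub_pos hA).ne']
  norm_num
  ring

theorem vacuumRetraction_mem_Nset : vacuumRetraction A ∈ Nset := by
  obtain ⟨v, hv, hP⟩ := exists_eq_vecMulVec_of_mul_self_eq_self
    (transpose_topEigenprojection hA) (topEigenprojection_mul_self hA)
    (trace_topEigenprojection hA)
  exact ⟨v, hv, by rw [vacuumRetraction, hP]⟩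

end S0Pos

theorem continuousOn_topEigenvalue : ContinuousOn topEigenvalue S0Pos := by
  have hp : ∀ A ∈ S0Pos, √((A * A).trace / 6) ≠ 0 := fun A hA =>
    (sqrt_pos.2 (by linarith [S0Pos.trace_mul_self_pos hA])).ne'
  unfold topEigenvalue vieteRoot
  fun_prop (disch := simp_all)

theorem continuousOn_vacuumRetraction : ContinuousOn vacuumRetraction S0Pos := by
  have hl := continuousOn_topEigenvalue
  have hD : ∀ A ∈ S0Pos, 3 * topEigenvalue A ^ 2 - (A * A).trace / 2 ≠ 0 := fun A hA =>
    (S0Pos.three_mul_sq_topEigenvalue_sub_pos hA).ne'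
  unfold vacuumRetraction topEigenprojection
  fun_prop (disch := assumption)

def uniaxial (v : Fin 3 → ℝ) : M3 := √(3 / 2) • (vecMulVec v v - (1 / 3 : ℝ) • 1)

section Uniaxial

variable {v : Fin 3 → ℝ} (hv : ∑ i, v i ^ 2 = 1)
include hv

theorem vecMulVec_self_mul_self : vecMulVec v v * vecMulVec v v = vecMulVec v v := by
  rw [vecMulVec_mul_vecMulVec]
  simp [dotProduct, ← sq, hv]

theorem trace_vecMulVec_self : (vecMulVec v v).trace = 1 := by
  simp [trace_vecMulVec, dotProduct, ← sq, hv]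

theorem uniaxial_mul_self :
    uniaxial v * uniaxial v = (1 / 2 : ℝ) • vecMulVec v v + (1 / 6 : ℝ) • (1 : M3) := by
  rw [uniaxial, smul_mul_smul_comm, mul_self_sqrt (by norm_num)]
  simp only [sub_mul, mul_sub, smul_mul_assoc, mul_smul_comm, mul_one, one_mul,
    vecMulVec_self_mul_self hv]
  module

theorem uniaxial_mul_self_mul_self :
    uniaxial v * uniaxial v * uniaxial v =
      √(3 / 2) • ((1 / 2 : ℝ) • vecMulVec v v - (1 / 18 : ℝ) • (1 : M3)) := by
  rw [uniaxial_mul_self hv, uniaxial]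
  simp only [add_mul, mul_sub, smul_mul_assoc, mul_smul_comm, mul_one, one_mul,
    vecMulVec_self_mul_self hv]
  module

theorem trace_uniaxial_mul_self : (uniaxial v * uniaxial v).trace = 1 := by
  rw [uniaxial_mul_self hv]
  simp [trace_vecMulVec_self hv]
  norm_num

theorem trace_uniaxial_mul_self_mul_self :
    (uniaxial v * uniaxial v * uniaxial v).trace = √(3 / 2) / 3 := by
  rw [uniaxial_mul_self_mul_self hv]
  simp [trace_vecMulVec_self hv]
  ring

theorem uniaxial_mem_S0Pos : uniaxial v ∈ S0Pos := by
  refine ⟨?_, ?_, ?_⟩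
  · simp [uniaxial, transpose_vecMulVec]
  · simp [uniaxial, trace_vecMulVec_self hv]
  · rw [trace_uniaxial_mul_self_mul_self hv]
    positivity

theorem topEigenvalue_uniaxial : topEigenvalue (uniaxial v) = 2 * √(1 / 6) := by
  rw [topEigenvalue, trace_uniaxial_mul_self hv, trace_uniaxial_mul_self_mul_self hv,
    vieteRoot_of_six_mul_sq_eq one_pos (by positivity)]
  rw [div_pow, sq_sqrt (by norm_num)]
  norm_num

theorem topEigenprojection_uniaxial : topEigenprojection (uniaxial v) = vecMulVec v v := by
  have hl_sq : (2 * √(1 / 6)) ^ 2 = 2 / 3 := by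
    rw [mul_pow, sq_sqrt (by norm_num)]
    norm_num
  have hl_mul : 2 * √(1 / 6) * √(3 / 2) = 1 := by
    rw [mul_assoc, ← sqrt_mul (by norm_num),
      show (1 / 6 : ℝ) * (3 / 2) = (1 / 2) ^ 2 by norm_num, sqrt_sq (by norm_num)]
    norm_num
  rw [topEigenprojection, topEigenvalue_uniaxial hv, trace_uniaxial_mul_self hv,
    uniaxial_mul_self hv, uniaxial, smul_smul, hl_mul, hl_sq]
  module

end Uniaxial

theorem Nset_subset_S0Pos : Nset ⊆ S0Pos := by
  rintro _ ⟨v, hv, rfl⟩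
  exact uniaxial_mem_S0Pos hv

theorem vacuumRetraction_eq_self {A : M3} (hA : A ∈ Nset) : vacuumRetraction A = A := by
  obtain ⟨v, hv, rfl⟩ := hA
  show vacuumRetraction (uniaxial v) = uniaxial v
  rw [vacuumRetraction, topEigenprojection_uniaxial hv, uniaxial]

theorem stmt12_general (Ω : Set E2) (hΩ_conn : IsConnected Ω)
    (hΩ_bdd : Bornology.IsBounded Ω)
    (g : E2 → M3)
    (hg_mem : ∀ x ∈ frontier Ω, g x ∈ Nset)
    (hg_nontriv : ¬ HomotopicallyTrivial Ω g)
    (Q : E2 → M3) (hQ_cont : ContinuousOn Q (closure Ω))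
    (hQ_S0 : ∀ x ∈ closure Ω, (Q x)ᵀ = Q x ∧ (Q x).trace = 0)
    (hQ_bd : ∀ x ∈ frontier Ω, Q x = g x)
    (hQ_beta : ∀ x ∈ closure Ω, Q x ≠ 0 → beta (Q x) < 1) :
    ∃ x ∈ closure Ω, Q x = 0 := by
  by_contra! hQ0
  have hcube_ne : ∀ x ∈ closure Ω, (Q x * Q x * Q x).trace ≠ 0 := fun x hx h => by
    simpa [beta, h] using hQ_beta x hx (hQ0 x hx)
  obtain ⟨x₀, hx₀⟩ : (frontier Ω).Nonempty := nonempty_frontier_iff.2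
    ⟨hΩ_conn.nonempty, fun h => NormedSpace.unbounded_univ ℝ E2 (h ▸ hΩ_bdd)⟩
  have hcube_pos : ∀ x ∈ closure Ω, 0 < (Q x * Q x * Q x).trace :=
    hΩ_conn.isPreconnected.closure.forall_pos_of_ne_zero (by fun_prop) hcube_ne
      (frontier_subset_closure hx₀) (hQ_bd x₀ hx₀ ▸ Nset_subset_S0Pos (hg_mem x₀ hx₀)).2.2
  have hQ_S0Pos : MapsTo Q (closure Ω) S0Pos := fun x hx =>
    ⟨(hQ_S0 x hx).1, (hQ_S0 x hx).2, hcube_pos x hx⟩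
  exact hg_nontriv ⟨vacuumRetraction ∘ Q, continuousOn_vacuumRetraction.comp hQ_cont hQ_S0Pos,
    fun x hx => S0Pos.vacuumRetraction_mem_Nset (hQ_S0Pos hx),
    fun x hx => by
      rw [Function.comp_apply, hQ_bd x hx, vacuumRetraction_eq_self (hg_mem x hx)]⟩

/-- If Ω is a bounded domain with smooth boundary, g : ∂Ω → N is continuous and not
homotopically trivial, and Q : Ω̄ → S₀ is continuous, equal to g on ∂Ω, and satisfies
β(Q(x)) < 1 at every point where Q(x) ≠ 0, then Q must vanish somewhere in Ω̄. -/
theorem stmt12 (Ω : Set E2) (hΩ_open : IsOpen Ω) (hΩ_conn : IsConnected Ω)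
    (hΩ_bdd : Bornology.IsBounded Ω) (hΩ_smooth : HasSmoothBoundary Ω)
    (g : E2 → M3) (hg_cont : ContinuousOn g (frontier Ω))
    (hg_mem : ∀ x ∈ frontier Ω, g x ∈ Nset)
    (hg_nontriv : ¬ HomotopicallyTrivial Ω g)
    (Q : E2 → M3) (hQ_cont : ContinuousOn Q (closure Ω))
    (hQ_S0 : ∀ x ∈ closure Ω, (Q x)ᵀ = Q x ∧ (Q x).trace = 0)
    (hQ_bd : ∀ x ∈ frontier Ω, Q x = g x)
    (hQ_beta : ∀ x ∈ closure Ω, Q x ≠ 0 → beta (Q x) < 1) :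
    ∃ x ∈ closure Ω, Q x = 0 :=
  stmt12_general Ω hΩ_conn hΩ_bdd g hg_mem hg_nontriv Q hQ_cont hQ_S0 hQ_bd hQ_beta
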